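/- arXiv:2001.08894 — 6 statements merged into one kernel-verified Lean document; each statement's English description precedes it below -/
import Mathlib

section
/- For an odd prime p with p ≡ 3 (mod 4), the Legendre sequence s of length p (with s_0 = 0, s_k = 1 if k is a nonzero quadratic residue mod p, s_k = -1 otherwise) has all off-peak periodic autocorrelations equal to -1; that is, for every shift t with t ≢ 0 (mod p), ∑_{k=0}^{p-1} s_k · s_{(k+t) mod p} = -1. -/
/-!
For a nontrivial multiplicative character `χ` of a finite field and `t ≠ 0`, the substitution
`x = -t * y` turns `∑ x, χ x * χ⁻¹ (x + t)` into `χ (-1) * J(χ, χ⁻¹)`, and the Jacobi sum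
evaluation `J(χ, χ⁻¹) = -χ (-1)` gives `-χ (-1) ^ 2 = -1`. The quadratic character is its own
inverse.
-/

open Finset

theorem MulChar.sum_mul_inv_apply_add_eq_neg_one {F R : Type*} [Field F] [Fintype F]
    [CommRing R] [IsDomain R] {χ : MulChar F R} (hχ : χ ≠ 1) {t : F} (ht : t ≠ 0) :
    ∑ x, χ x * χ⁻¹ (x + t) = -1 := by
  have hunit : χ t * χ⁻¹ t = 1 := by
    rw [inv_apply', ← map_mul, mul_inv_cancel₀ ht, map_one]
  calc ∑ x, χ x * χ⁻¹ (x + t)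
      = ∑ y, χ (-t * y) * χ⁻¹ (-t * y + t) :=
        (Fintype.sum_equiv (Equiv.mulLeft₀ (-t) (neg_ne_zero.mpr ht)) _ _ fun _ => rfl).symm
    _ = ∑ y, χ (-1) * (χ t * χ⁻¹ t) * (χ y * χ⁻¹ (1 - y)) := by
        refine sum_congr rfl fun y _ => ?_
        rw [show -t * y + t = t * (1 - y) by ring, show -t * y = -1 * t * y by ring,
          map_mul, map_mul, map_mul]
        ring
    _ = χ (-1) * jacobiSum χ χ⁻¹ := by rw [hunit, mul_one, jacobiSum, mul_sum]
    _ = -1 := by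
        rw [jacobiSum_nontrivial_inv hχ, mul_neg, ← map_mul, neg_one_mul, neg_neg, map_one]

theorem quadraticChar_sum_mul_apply_add_eq_neg_one {F : Type*} [Field F] [Fintype F]
    [DecidableEq F] (hF : ringChar F ≠ 2) {t : F} (ht : t ≠ 0) :
    ∑ x, quadraticChar F x * quadraticChar F (x + t) = -1 := by
  conv_lhs => enter [2, x, 2]; rw [← (quadraticChar_isQuadratic F).inv]
  exact MulChar.sum_mul_inv_apply_add_eq_neg_one (quadraticChar_ne_one hF) ht

theorem legendre_seq_offpeak_autocorrelation_three_mod_four_general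
    (p : ℕ) [Fact p.Prime] (hp : Odd p)
    (s : ZMod p → ℤ) (hs : ∀ k, s k = quadraticChar (ZMod p) k)
    (t : ZMod p) (ht : t ≠ 0) :
    ∑ k : ZMod p, s k * s (k + t) = -1 := by
  have hchar : ringChar (ZMod p) ≠ 2 := by
    rw [ZMod.ringChar_zmod_n]
    exact hp.ne_two_of_dvd_nat dvd_rfl
  simp only [hs]
  exact quadraticChar_sum_mul_apply_add_eq_neg_one hchar ht

theorem legendre_seq_offpeak_autocorrelation_three_mod_four
    (p : ℕ) [Fact p.Prime] (hp : Odd p) (h3 : p % 4 = 3)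
    (s : ZMod p → ℤ) (hs : ∀ k, s k = quadraticChar (ZMod p) k)
    (t : ZMod p) (ht : t ≠ 0) :
    ∑ k : ZMod p, s k * s (k + t) = -1 :=
  legendre_seq_offpeak_autocorrelation_three_mod_four_general p hp s hs t ht
end

section
/- Let F be a finite field of odd cardinality q with quadratic character χ (χ(0)=0). For m ∈ F and arrays S_m : F × F → ℤ defined by S_m(x,y) = χ(x)·χ(m·x + y), the off-peak periodic autocorrelation of S_m is bounded in magnitude by q - 1: for any (u,v) ≠ (0,0), |∑_{x,y ∈ F} S_m(x,y)·S_m(x+u, y+v)| ≤ q - 1. -/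
/-!
The shear `(x, y) ↦ (x, m x + y)` splits the autocorrelation of `S_m` at `(u, v)` into the
product of the one-dimensional autocorrelations of `χ` at `u` and at `m u + v`. For a nontrivial
character, `∑ χ(x) χ⁻¹(x + b)` is `q - 1` at `b = 0` and, after the substitution `x = -b t`,
equals `χ(-1) J(χ, χ⁻¹) = -1` otherwise. Since `(u, v) ≠ (0, 0)`, at most one of the two factors
is `q - 1` and the other has absolute value one.
-/

open Finset

section Autocorrelation

variable {G R : Type*} [AddCommGroup G] [Fintype G] [CommSemiring R]

def autocorrelation (f : G → R) (b : G) : R :=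
  ∑ x, f x * f (x + b)

theorem autocorrelation_shear {F : Type*} [Ring F] [Fintype F] (f : F → R) (m u v : F) :
    autocorrelation (fun p : F × F ↦ f p.1 * f (m * p.1 + p.2)) (u, v) =
      autocorrelation f u * autocorrelation f (m * u + v) := by
  simp only [autocorrelation, Fintype.sum_prod_type, Prod.fst_add, Prod.snd_add, sum_mul]
  refine sum_congr rfl fun x _ ↦ ?_
  rw [mul_sum]
  refine Fintype.sum_equiv (Equiv.addLeft (m * x)) _ _ fun y ↦ ?_
  rw [Equiv.coe_addLeft, show m * (x + u) + (y + v) = m * x + y + (m * u + v) by noncomm_ring]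
  ring

end Autocorrelation

namespace MulChar

variable {F R : Type*} [Field F] [Fintype F] [CommRing R]

theorem sum_mul_inv_apply_self [DecidableEq F] (χ : MulChar F R) :
    ∑ x, χ x * χ⁻¹ x = Fintype.card F - 1 := by
  simp_rw [← mul_apply, mul_inv_cancel, sum_one_eq_card_units, Fintype.card_units]
  rw [Nat.cast_sub Fintype.card_pos, Nat.cast_one]

theorem sum_mul_inv_apply_add [IsDomain R] {χ : MulChar F R} (hχ : χ ≠ 1) {b : F} (hb : b ≠ 0) :
    ∑ x, χ x * χ⁻¹ (x + b) = -1 := by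
  have hunit : χ b * χ⁻¹ b = 1 := by
    rw [← mul_apply, mul_inv_cancel, one_apply (Ne.isUnit hb)]
  have hsq : χ (-1) * χ (-1) = 1 := by
    rw [← map_mul, neg_one_mul, neg_neg, map_one]
  calc ∑ x, χ x * χ⁻¹ (x + b)
      = ∑ t, χ (-b * t) * χ⁻¹ (-b * t + b) :=
        (Equiv.sum_comp (Equiv.mulLeft₀ (-b) (neg_ne_zero.mpr hb)) _).symm
    _ = ∑ t, χ (-1) * (χ b * χ⁻¹ b) * (χ t * χ⁻¹ (1 - t)) := by
        refine sum_congr rfl fun t _ ↦ ?_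
        rw [show -b * t + b = b * (1 - t) by ring, show -b * t = -1 * b * t by ring]
        simp only [map_mul]
        ring
    _ = χ (-1) * jacobiSum χ χ⁻¹ := by rw [hunit, mul_one, jacobiSum, mul_sum]
    _ = -1 := by rw [jacobiSum_nontrivial_inv hχ, mul_neg, hsq]

end MulChar

namespace MulChar.IsQuadratic

variable {F R : Type*} [Field F] [Fintype F] [CommRing R] {χ : MulChar F R}

theorem autocorrelation_zero [DecidableEq F] (hχ : χ.IsQuadratic) :
    autocorrelation ⇑χ 0 = (Fintype.card F : R) - 1 := by
  simpa only [autocorrelation, add_zero, hχ.inv] using χ.sum_mul_inv_apply_self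

theorem autocorrelation_of_ne_zero [IsDomain R] (hχ : χ.IsQuadratic) (hχ1 : χ ≠ 1)
    {b : F} (hb : b ≠ 0) : autocorrelation ⇑χ b = -1 := by
  simpa only [autocorrelation, hχ.inv] using sum_mul_inv_apply_add hχ1 hb

theorem abs_autocorrelation_le [DecidableEq F] [LinearOrder R] [IsStrictOrderedRing R]
    (hχ : χ.IsQuadratic) (hχ1 : χ ≠ 1) (b : F) :
    |autocorrelation ⇑χ b| ≤ (Fintype.card F : R) - 1 := by
  have hcard : (2 : R) ≤ Fintype.card F := by exact_mod_cast Fintype.one_lt_card (α := F)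
  rcases eq_or_ne b 0 with rfl | hb
  · rw [hχ.autocorrelation_zero, abs_of_nonneg (by linarith)]
  · rw [hχ.autocorrelation_of_ne_zero hχ1 hb, abs_neg, abs_one]
    linarith

end MulChar.IsQuadratic

theorem circulant_legendre_autocorrelation_bound
    (F : Type*) [Field F] [Fintype F] [DecidableEq F]
    (hodd : Odd (Fintype.card F))
    (χ : F → ℤ) (hχ : ∀ x, χ x = quadraticChar F x)
    (S : F → F × F → ℤ) (hS : ∀ m x y, S m (x, y) = χ x * χ (m * x + y))
    (m : F) (u v : F) (huv : (u, v) ≠ (0, 0)) :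
    |∑ x : F, ∑ y : F, S m (x, y) * S m (x + u, y + v)| ≤ (Fintype.card F : ℤ) - 1 := by
  have hF : ringChar F ≠ 2 := fun h ↦ by
    have := FiniteField.even_card_of_char_two h
    rw [Nat.odd_iff] at hodd
    omega
  have hquad := quadraticChar_isQuadratic F
  have hnontriv := quadraticChar_ne_one hF
  obtain rfl : χ = quadraticChar F := funext hχ
  have hSm : S m = fun p ↦ quadraticChar F p.1 * quadraticChar F (m * p.1 + p.2) :=
    funext fun p ↦ hS m p.1 p.2
  rw [← Fintype.sum_prod_type' fun x y ↦ S m (x, y) * S m (x + u, y + v)]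
  change |autocorrelation (S m) (u, v)| ≤ _
  rw [hSm, autocorrelation_shear]
  rcases eq_or_ne u 0 with rfl | hu
  · have hv : v ≠ 0 := by rintro rfl; exact huv rfl
    rw [mul_zero, zero_add, hquad.autocorrelation_of_ne_zero hnontriv hv, mul_neg_one, abs_neg]
    exact hquad.abs_autocorrelation_le hnontriv 0
  · rw [hquad.autocorrelation_of_ne_zero hnontriv hu, neg_one_mul, abs_neg]
    exact hquad.abs_autocorrelation_le hnontriv _
end

section
/- Let F be a finite field of odd cardinality q with quadratic character χ, and S_m(x,y) = χ(x)·χ(m·x + y). If (u,v) ≠ (0,0) and m·u + v ≠ 0, then the autocorrelation ∑_{x,y} S_m(x,y)·S_m(x+u,y+v) equals 1 - q when u = 0, and equals 1 when u ≠ 0. -/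
/-!
Substituting `y ↦ m x + y` in the inner sum splits the double sum into the product of two
autocorrelations `A(c) = ∑ x, χ x χ (x + c)` of the quadratic character, namely `A u · A (m u + v)`.
Since `χ x = χ x⁻¹` for `x ≠ 0`, `χ x χ (x + c) = χ (1 + c x⁻¹)` away from `x = 0`, and as
`x ↦ 1 + c x⁻¹` is a bijection of `F` when `c ≠ 0` (with `0⁻¹ = 0`), `A c = ∑ χ - χ 1 = -1`;
while `A 0 = q - 1`.
-/

open Finset

theorem sum_sum_mul_shift_eq_mul {F R : Type*} [CommRing F] [Fintype F] [CommSemiring R]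
    (f : F → R) (m u v : F) :
    ∑ x, ∑ y, f x * f (m * x + y) * (f (x + u) * f (m * (x + u) + (y + v))) =
      (∑ x, f x * f (x + u)) * ∑ t, f t * f (t + (m * u + v)) := by
  rw [sum_mul]
  refine sum_congr rfl fun x _ => ?_
  rw [mul_sum]
  refine Fintype.sum_equiv (Equiv.addLeft (m * x)) _ _ fun y => ?_
  rw [Equiv.coe_addLeft, show m * (x + u) + (y + v) = m * x + y + (m * u + v) by ring]
  ring

namespace MulChar.IsQuadratic

variable {F R : Type*} [Field F] [DecidableEq F] [CommRing R] {χ : MulChar F R}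

/-- For `x ≠ 0` this is `χ x = χ x⁻¹`; the correction term accounts for `0⁻¹ = 0`. -/
theorem mul_apply_add (hχ : χ.IsQuadratic) (x c : F) :
    χ x * χ (x + c) = χ (1 + c * x⁻¹) - if x = 0 then 1 else 0 := by
  rcases eq_or_ne x 0 with rfl | hx
  · simp
  · rw [if_neg hx, sub_zero]
    calc χ x * χ (x + c) = χ x⁻¹ * χ (x + c) := by rw [← inv_apply', hχ.inv]
      _ = χ (1 + c * x⁻¹) := by rw [← map_mul]; congr 1; field_simp

theorem sum_mul_apply_add [Fintype F] (hχ : χ.IsQuadratic) (c : F) :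
    ∑ x, χ x * χ (x + c) = ∑ y, χ (1 + c * y) - 1 := by
  simp only [hχ.mul_apply_add, sum_sub_distrib, sum_ite_eq', mem_univ, if_true]
  exact congrArg (· - 1) (Equiv.sum_comp (Equiv.inv F) fun y => χ (1 + c * y))

theorem sum_mul_apply_self [Fintype F] (hχ : χ.IsQuadratic) :
    ∑ x, χ x * χ x = Fintype.card F - 1 := by
  simpa using hχ.sum_mul_apply_add 0

theorem sum_mul_apply_add_of_ne_zero [Fintype F] [IsDomain R] (hχ : χ.IsQuadratic) (hχ₁ : χ ≠ 1)
    {c : F} (hc : c ≠ 0) : ∑ x, χ x * χ (x + c) = -1 := by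
  have h_affine : ∑ y, χ (1 + c * y) = ∑ z, χ z :=
    Equiv.sum_comp ((Equiv.mulLeft₀ c hc).trans (Equiv.addLeft 1)) χ
  rw [hχ.sum_mul_apply_add, h_affine, sum_eq_zero_of_ne_one hχ₁, zero_sub]

end MulChar.IsQuadratic

theorem circulant_legendre_autocorrelation_case1_general
    (F : Type*) [Field F] [Fintype F] [DecidableEq F]
    (hodd : Odd (Fintype.card F))
    (χ : F → ℤ) (hχ : ∀ x, χ x = quadraticChar F x)
    (S : F → F × F → ℤ) (hS : ∀ m x y, S m (x, y) = χ x * χ (m * x + y))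
    (m : F) (u v : F) (h : m * u + v ≠ 0) :
    (u = 0 → ∑ x : F, ∑ y : F, S m (x, y) * S m (x + u, y + v) = 1 - (Fintype.card F : ℤ)) ∧
    (u ≠ 0 → ∑ x : F, ∑ y : F, S m (x, y) * S m (x + u, y + v) = 1) := by
  have hF : ringChar F ≠ 2 := fun h2 => by
    have := FiniteField.even_card_of_char_two h2
    rw [Nat.odd_iff] at hodd
    omega
  have hquad := quadraticChar_isQuadratic F
  have hsum : ∑ x : F, ∑ y : F, S m (x, y) * S m (x + u, y + v) =
      (∑ x, quadraticChar F x * quadraticChar F (x + u)) * -1 := by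
    simp only [hS, hχ]
    rw [sum_sum_mul_shift_eq_mul,
      hquad.sum_mul_apply_add_of_ne_zero (quadraticChar_ne_one hF) h]
  refine ⟨fun hu => ?_, fun hu => ?_⟩
  · rw [hsum, hu]
    simp only [add_zero, hquad.sum_mul_apply_self]
    ring
  · rw [hsum, hquad.sum_mul_apply_add_of_ne_zero (quadraticChar_ne_one hF) hu]
    norm_num

theorem circulant_legendre_autocorrelation_case1
    (F : Type*) [Field F] [Fintype F] [DecidableEq F]
    (hodd : Odd (Fintype.card F))
    (χ : F → ℤ) (hχ : ∀ x, χ x = quadraticChar F x)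
    (S : F → F × F → ℤ) (hS : ∀ m x y, S m (x, y) = χ x * χ (m * x + y))
    (m : F) (u v : F) (huv : (u, v) ≠ (0, 0)) (h : m * u + v ≠ 0) :
    (u = 0 → ∑ x : F, ∑ y : F, S m (x, y) * S m (x + u, y + v) = 1 - (Fintype.card F : ℤ)) ∧
    (u ≠ 0 → ∑ x : F, ∑ y : F, S m (x, y) * S m (x + u, y + v) = 1) :=
  circulant_legendre_autocorrelation_case1_general F hodd χ hχ S hS m u v h
end

section
/- Let F be a finite field of odd cardinality q with quadratic character χ, and for m ∈ F define S_m(x,y) = χ(x)·χ(m·x+y). For any two distinct m₁, m₂ ∈ F and any shift (u,v) ∈ F × F, the periodic cross-correlation |∑_{x,y ∈ F} S_{m₁}(x,y)·S_{m₂}(x+u, y+v)| ≤ q + 1. -/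
/-!
Shifting `y ↦ m₁ x + y` turns the inner sum over `y` into a value `A (c)` of the autocorrelation
`A (c) = ∑ z, χ z * χ (z + c)`, at `c = (m₂ - m₁) x + (m₂ u + v)`. Through the Jacobi sum `J(χ, χ)`,
a nontrivial quadratic character has two-level autocorrelation `A (c) = q [c = 0] - 1`. Since
`m₁ ≠ m₂`, exactly one `x₀` makes `c` vanish, so the cross-correlation is
`q χ(x₀) χ(x₀ + u) - A (u)`, whose absolute value is at most `q + 1`.
-/

open Finset

section

variable {F R : Type*} [Field F] [Fintype F] [DecidableEq F] [CommRing R] [IsDomain R]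

/-- Substituting `x = -c y` turns the sum into `χ (-1)` times the Jacobi sum `J(χ, χ⁻¹)`. -/
theorem MulChar.sum_mul_inv_apply_add_s8 {χ : MulChar F R} (hχ : χ ≠ 1) (c : F) :
    ∑ x, χ x * χ⁻¹ (x + c) = (if c = 0 then (Fintype.card F : R) else 0) - 1 := by
  split_ifs with hc
  · simp_rw [hc, add_zero, ← MulChar.mul_apply, mul_inv_cancel, MulChar.sum_one_eq_card_units,
      Fintype.card_eq_card_units_add_one F, Nat.cast_add, Nat.cast_one, add_sub_cancel_right]
  · have hχc : χ c * χ⁻¹ c = 1 := by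
      rw [MulChar.inv_apply', ← map_mul, mul_inv_cancel₀ hc, map_one]
    have hχ₁ : χ (-1) * χ (-1) = 1 := by rw [← map_mul, neg_one_mul, neg_neg, map_one]
    calc ∑ x, χ x * χ⁻¹ (x + c)
        = ∑ y, χ (-c * y) * χ⁻¹ (-c * y + c) :=
          (Equiv.sum_comp (Equiv.mulLeft₀ (-c) (neg_ne_zero.2 hc)) _).symm
      _ = ∑ y, χ (-1) * (χ c * χ⁻¹ c) * (χ y * χ⁻¹ (1 - y)) := by
          refine sum_congr rfl fun y _ => ?_
          rw [show -c * y + c = c * (1 - y) by ring, show -c * y = -1 * c * y by ring,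
            map_mul, map_mul, map_mul]
          ring
      _ = χ (-1) * jacobiSum χ χ⁻¹ := by rw [hχc, mul_one, jacobiSum, mul_sum]
      _ = 0 - 1 := by rw [jacobiSum_nontrivial_inv hχ, mul_neg, hχ₁, zero_sub]

theorem MulChar.IsQuadratic.sum_mul_apply_add_s8 {χ : MulChar F R}
    (hχ : χ.IsQuadratic) (hχ₁ : χ ≠ 1) (c : F) :
    ∑ x, χ x * χ (x + c) = (if c = 0 then (Fintype.card F : R) else 0) - 1 := by
  simpa only [hχ.inv] using MulChar.sum_mul_inv_apply_add_s8 hχ₁ c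

end

theorem Fintype.sum_ite_mul_add_eq_zero {F R : Type*} [Field F] [Fintype F] [DecidableEq F]
    [AddCommMonoid R] {a : F} (ha : a ≠ 0) (b : F) (g : F → R) :
    ∑ x, (if a * x + b = 0 then g x else 0) = g (-b / a) := by
  simp_rw [add_eq_zero_iff_eq_neg, mul_comm a, ← eq_div_iff ha, sum_ite_eq']

theorem sum_sum_mul_shear_eq_sum_mul_sum {F R : Type*} [CommRing F] [Fintype F] [CommRing R]
    (f : F → R) (m₁ m₂ u v : F) :
    ∑ x, ∑ y, f x * f (m₁ * x + y) * (f (x + u) * f (m₂ * (x + u) + (y + v))) =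
      ∑ x, f x * f (x + u) * ∑ z, f z * f (z + ((m₂ - m₁) * x + (m₂ * u + v))) := by
  refine sum_congr rfl fun x _ => ?_
  rw [mul_sum]
  refine Fintype.sum_equiv (Equiv.addLeft (m₁ * x)) _ _ fun y => ?_
  rw [Equiv.coe_addLeft,
    show m₁ * x + y + ((m₂ - m₁) * x + (m₂ * u + v)) = m₂ * (x + u) + (y + v) by ring]
  ring

theorem Fintype.sum_mul_ite_sub_one {F R : Type*} [Field F] [Fintype F] [DecidableEq F]
    [CommRing R] {a : F} (ha : a ≠ 0) (b : F) (q : R) (g : F → R) :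
    ∑ x, g x * ((if a * x + b = 0 then q else 0) - 1) = q * g (-b / a) - ∑ x, g x := by
  simp_rw [mul_sub, mul_one, sum_sub_distrib, mul_ite, mul_zero, mul_comm (g _) q,
    Fintype.sum_ite_mul_add_eq_zero ha]

theorem MulChar.IsQuadratic.abs_mul_sub_le {F : Type*} [Field F] [DecidableEq F]
    {χ : MulChar F ℤ} (hχ : χ.IsQuadratic) {q : ℤ} (hq : 0 ≤ q) (x u : F) :
    |q * (χ x * χ (x + u)) - ((if u = 0 then q else 0) - 1)| ≤ q + 1 := by
  rw [abs_le]
  by_cases hu : u = 0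
  · rw [if_pos hu, hu, add_zero]
    rcases hχ x with h | h | h <;> rw [h] <;> constructor <;> linarith
  · rw [if_neg hu]
    rcases hχ x with h | h | h <;> rcases hχ (x + u) with h' | h' | h' <;> rw [h, h'] <;>
      constructor <;> linarith

theorem circulant_legendre_crosscorrelation_bound
    (F : Type*) [Field F] [Fintype F] [DecidableEq F]
    (hodd : Odd (Fintype.card F))
    (χ : F → ℤ) (hχ : ∀ x, χ x = quadraticChar F x)
    (S : F → F × F → ℤ) (hS : ∀ m x y, S m (x, y) = χ x * χ (m * x + y))
    (m₁ m₂ : F) (hm : m₁ ≠ m₂) (u v : F) :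
    |∑ x : F, ∑ y : F, S m₁ (x, y) * S m₂ (x + u, y + v)| ≤ (Fintype.card F : ℤ) + 1 := by
  have hF : ringChar F ≠ 2 := fun h =>
    Nat.not_even_iff_odd.2 hodd (Nat.even_iff.2 (FiniteField.even_card_iff_char_two.1 h))
  have hquad := quadraticChar_isQuadratic F
  have autocorrelation := hquad.sum_mul_apply_add_s8 (quadraticChar_ne_one hF)
  simp only [hS, hχ]
  rw [sum_sum_mul_shear_eq_sum_mul_sum]
  simp_rw [autocorrelation]
  rw [Fintype.sum_mul_ite_sub_one (sub_ne_zero.2 hm.symm), autocorrelation]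
  exact hquad.abs_mul_sub_le (Nat.cast_nonneg _) _ u
end

section
/- Let F be a finite field of odd cardinality q with quadratic character χ. For any m ∈ F and nonzero u ∈ F with v = -m·u, the shift (u, v) achieves autocorrelation value exactly 1 - q for S_m; hence the bound q - 1 on the magnitude of off-peak autocorrelation of S_m is attained. -/
/-!
Along the shift `(u, -m u)` the second factor of `S_m` does not move, since
`m (x + u) + (y - m u) = m x + y`. Summing over `y` therefore contributes `∑ χ(t)² = q - 1`
for every `x`, and what is left is the correlation `∑ₓ χ(x) χ(x + u)`. The
substitution `x = -u t` turns it into `χ(-1) J(χ, χ)`, and the Jacobi sum of a quadratic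
character with itself is `J(χ, χ⁻¹) = -χ(-1)`, so the correlation is `-1`.
-/

open Finset

namespace MulChar.IsQuadratic

variable {F R : Type*} [Field F] [Fintype F] [CommRing R] {χ : MulChar F R}

theorem sum_sq (hχ : χ.IsQuadratic) : ∑ x, χ x ^ 2 = (Fintype.card F : R) - 1 := by
  classical
  simp_rw [← χ.pow_apply' two_ne_zero, hχ.sq_eq_one, sum_one_eq_card_units,
    Fintype.card_eq_card_units_add_one (α := F), Nat.cast_add, Nat.cast_one, add_sub_cancel_right]

theorem sum_mul_add_eq_neg_one [IsDomain R] (hχ : χ.IsQuadratic) (hχ₁ : χ ≠ 1) {u : F}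
    (hu : u ≠ 0) : ∑ x, χ x * χ (x + u) = -1 := by
  have hJ : jacobiSum χ χ = -χ (-1) := by
    simpa only [hχ.inv] using jacobiSum_nontrivial_inv hχ₁
  have hsub : ∑ x, χ x * χ (x + u) = χ (-1) * jacobiSum χ χ := by
    rw [jacobiSum, mul_sum, ← Equiv.sum_comp (Equiv.mulLeft₀ (-u) (neg_ne_zero.2 hu))]
    refine sum_congr rfl fun t _ => ?_
    change χ (-u * t) * χ (-u * t + u) = _
    have hsq : χ u * χ u = 1 := by
      rw [← sq, ← χ.pow_apply' two_ne_zero, hχ.sq_eq_one]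
      exact one_apply_coe (Units.mk0 u hu)
    rw [show -u * t + u = u * (1 - t) by ring, show -u * t = -1 * u * t by ring,
      map_mul, map_mul, map_mul]
    linear_combination (χ (-1) * χ t * χ (1 - t)) * hsq
  have hneg : χ (-1) * χ (-1) = 1 := by rw [← map_mul, neg_one_mul, neg_neg, map_one]
  rw [hsub, hJ, mul_neg, hneg]

end MulChar.IsQuadratic

theorem autocorrelation_bound_attained
    (F : Type*) [Field F] [Fintype F] [DecidableEq F]
    (hodd : Odd (Fintype.card F))
    (χ : F → ℤ) (hχ : ∀ x, χ x = quadraticChar F x)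
    (S : F → F × F → ℤ) (hS : ∀ m x y, S m (x, y) = χ x * χ (m * x + y))
    (m u : F) (hu : u ≠ 0) :
    ∑ x : F, ∑ y : F, S m (x, y) * S m (x + u, y + (-(m * u))) = 1 - (Fintype.card F : ℤ) ∧
    |∑ x : F, ∑ y : F, S m (x, y) * S m (x + u, y + (-(m * u)))| = (Fintype.card F : ℤ) - 1 := by
  have hF : ringChar F ≠ 2 := fun h => by
    have := FiniteField.even_card_of_char_two h
    rw [Nat.odd_iff] at hodd
    omega
  have hq := quadraticChar_isQuadratic F
  have hinner (c : F) : ∑ y, quadraticChar F (c + y) ^ 2 = (Fintype.card F : ℤ) - 1 :=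
    (Equiv.sum_comp (Equiv.addLeft c) (quadraticChar F · ^ 2)).trans hq.sum_sq
  have hcorr : ∑ x : F, ∑ y : F, S m (x, y) * S m (x + u, y + (-(m * u)))
      = 1 - (Fintype.card F : ℤ) := calc
    _ = ∑ x, quadraticChar F x * quadraticChar F (x + u) *
          ∑ y, quadraticChar F (m * x + y) ^ 2 := by
      simp_rw [hS, hχ, mul_sum]
      refine sum_congr rfl fun x _ => sum_congr rfl fun y _ => ?_
      rw [show m * (x + u) + (y + -(m * u)) = m * x + y by ring]
      ring
    _ = (∑ x, quadraticChar F x * quadraticChar F (x + u)) * (Fintype.card F - 1) := by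
      simp_rw [hinner, sum_mul]
    _ = 1 - Fintype.card F := by
      rw [hq.sum_mul_add_eq_neg_one (quadraticChar_ne_one hF) hu]
      ring
  refine ⟨hcorr, ?_⟩
  rw [hcorr, abs_sub_comm, abs_of_nonneg (sub_nonneg.2 (by exact_mod_cast Fintype.card_pos))]
end

section
/- Let p be an odd prime with p ≡ 1 (mod 4), and let s be the Legendre sequence of length p with s_0 = 1 (i.e., s_k = Legendre symbol (k/p) for k ≠ 0 and s_0 = 1). Then every off-peak periodic autocorrelation of s lies in {1, -3}. -/
/-!
Write `s = χ + δ₀`. Expanding the product, the autocorrelation at `t ≠ 0` is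
`∑ χ(k) χ(k + t) + χ(t) + χ(-t)`. Substituting `k ↦ 1 + t k⁻¹` turns the character sum into
`∑ χ - χ(1) = -1`, and `χ(-1) = 1` because `p ≡ 1 (mod 4)`, so the value is `2 χ(t) - 1 ∈ {1, -3}`.
-/

open Finset

theorem MulChar.IsQuadratic.sum_mul_shift_eq_neg_one {F R : Type*} [Field F] [Fintype F]
    [CommRing R] [IsDomain R] {χ : MulChar F R} (hχ : χ.IsQuadratic) (hχ1 : χ ≠ 1)
    {t : F} (ht : t ≠ 0) : ∑ x, χ x * χ (x + t) = -1 := by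
  classical
  -- For `x ≠ 0`, `χ x = χ x⁻¹`, so the term is `χ (1 + t * x⁻¹)`; at `x = 0` that formula gives
  -- `χ 1 = 1` instead of `0` since `0⁻¹ = 0`.
  have hterm : ∀ x, χ x * χ (x + t) = χ (1 + t * x⁻¹) - if x = 0 then 1 else 0 := by
    intro x
    rcases eq_or_ne x 0 with rfl | hx
    · simp
    · have hχx : χ x = χ x⁻¹ := by rw [← inv_apply', hχ.inv]
      rw [if_neg hx, sub_zero, hχx, ← map_mul]
      congr 1
      field_simp
  have hbij : Function.Bijective fun x : F => 1 + t * x⁻¹ :=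
    ((Equiv.inv F).trans ((Equiv.mulLeft₀ t ht).trans (Equiv.addLeft 1))).bijective
  rw [sum_congr rfl fun x _ => hterm x, sum_sub_distrib, hbij.sum_comp (fun y => χ y),
    sum_eq_zero_of_ne_one hχ1, sum_ite_eq' univ (0 : F)]
  simp

theorem sum_add_ite_zero_mul_shift {G R : Type*} [AddGroup G] [Fintype G] [DecidableEq G]
    [CommRing R] (f : G → R) {t : G} (ht : t ≠ 0) :
    ∑ k, (f k + if k = 0 then 1 else 0) * (f (k + t) + if k + t = 0 then 1 else 0)
      = ∑ k, f k * f (k + t) + f t + f (-t) := by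
  have hshift : ∀ k : G, k + t = 0 ↔ k = -t := fun k => add_eq_zero_iff_eq_neg
  simp [hshift, add_mul, mul_add, sum_add_distrib, ht]

theorem quadraticChar_neg_one_eq_one_of_card_mod_four_ne_three {F : Type*} [Field F] [Fintype F]
    [DecidableEq F] (hF : Fintype.card F % 4 ≠ 3) : quadraticChar F (-1) = 1 :=
  (quadraticChar_one_iff_isSquare (neg_ne_zero.mpr one_ne_zero)).mpr
    (FiniteField.isSquare_neg_one_iff.mpr hF)

theorem legendre_seq_one_mod_four_autocorrelation
    (p : ℕ) [Fact p.Prime] (hp : p % 4 = 1)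
    (s : ZMod p → ℤ) (hs0 : s 0 = 1)
    (hs : ∀ k : ZMod p, k ≠ 0 → s k = quadraticChar (ZMod p) k)
    (t : ZMod p) (ht : t ≠ 0) :
    ∑ k : ZMod p, s k * s (k + t) ∈ ({1, -3} : Set ℤ) := by
  set χ := quadraticChar (ZMod p)
  have hχ1 : χ ≠ 1 := quadraticChar_ne_one (by rw [ZMod.ringChar_zmod_n]; omega)
  have hs_eq : s = fun k => χ k + if k = 0 then 1 else 0 := by
    funext k
    rcases eq_or_ne k 0 with rfl | hk
    · simp [χ, hs0]
    · simp [hs k hk, hk]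
  have hχ_neg : χ (-t) = χ t := by
    rw [neg_eq_neg_one_mul, map_mul,
      quadraticChar_neg_one_eq_one_of_card_mod_four_ne_three (by rw [ZMod.card]; omega), one_mul]
  rw [hs_eq, sum_add_ite_zero_mul_shift _ ht, hχ_neg,
    (quadraticChar_isQuadratic _).sum_mul_shift_eq_neg_one hχ1 ht]
  rcases quadraticChar_dichotomy ht with h | h <;> simp [χ, h]
end
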